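/- Every stabilizer group H on I = I₁ ⊕ I₂ of rank m admits a canonical generating set: there exist natural numbers r, s with r + 2s = m and elements z₁,…,z_r, w₁,…,w_s, w̄₁,…,w̄_s generating H (independent, so |H| = 2^{r+2s}) such that each A₂-restriction p_{A₂}(z_i) commutes with the A₂-restrictions of all listed generators, and each p_{A₂}(w_i) anticommutes with p_{A₂}(w̄_i) and commutes with the A₂-restrictions of all other listed generators. -/

import Mathlib

open scoped ComplexOrder Matrix

noncomputable section

/-- The single-qubit Pauli matrices `σ⁰, σˣ, σʸ, σᶻ`. -/
def pauli : Fin 4 → Matrix (Fin 2) (Fin 2) ℂ :=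
  ![1, !![0, 1; 1, 0], !![0, -Complex.I; Complex.I, 0], !![1, 0; 0, -1]]

/-- Configurations of the qubits on `I₁ ⊕ I₂`, presented in factorized form. -/
abbrev Config (I₁ I₂ : Type) := (I₁ → Fin 2) × (I₂ → Fin 2)

variable {I₁ I₂ : Type} [Fintype I₁] [Fintype I₂] [DecidableEq I₁] [DecidableEq I₂]

/-- The sign-free tensor product `⨂_{i ∈ I₁ ⊕ I₂} σ^{a(i)}` of single-qubit Pauli
matrices, as a matrix on the factorized configuration space. -/
def pauliTensor (a : I₁ ⊕ I₂ → Fin 4) :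
    Matrix (Config I₁ I₂) (Config I₁ I₂) ℂ :=
  fun c c' => ∏ i, pauli (a i) (Sum.elim c.1 c.2 i) (Sum.elim c'.1 c'.2 i)

/-- A Pauli operator on `I₁ ⊕ I₂`: `ε·⨂ᵢ σ^{a(i)}` with `ε ∈ {1,−1}`. -/
def IsPauli (M : Matrix (Config I₁ I₂) (Config I₁ I₂) ℂ) : Prop :=
  ∃ (ε : ℂ) (a : I₁ ⊕ I₂ → Fin 4), (ε = 1 ∨ ε = -1) ∧ M = ε • pauliTensor a

/-- A Pauli operator supported in `A₁`, i.e. acting trivially on all sites of `I₂`. -/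
def SupportedIn1 (M : Matrix (Config I₁ I₂) (Config I₁ I₂) ℂ) : Prop :=
  ∃ (ε : ℂ) (a : I₁ ⊕ I₂ → Fin 4), (ε = 1 ∨ ε = -1) ∧ M = ε • pauliTensor a ∧
    ∀ i : I₂, a (Sum.inr i) = 0

/-- A Pauli operator supported in `A₂`, i.e. acting trivially on all sites of `I₁`. -/
def SupportedIn2 (M : Matrix (Config I₁ I₂) (Config I₁ I₂) ℂ) : Prop :=
  ∃ (ε : ℂ) (a : I₁ ⊕ I₂ → Fin 4), (ε = 1 ∨ ε = -1) ∧ M = ε • pauliTensor a ∧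
    ∀ i : I₁, a (Sum.inl i) = 0

/-- A stabilizer group on `I₁ ⊕ I₂`: a finite abelian group of Pauli operators under
matrix multiplication not containing `-1`; every element is Hermitian and squares to
the identity. -/
structure StabilizerGroup (I₁ I₂ : Type) [Fintype I₁] [Fintype I₂]
    [DecidableEq I₁] [DecidableEq I₂] where
  carrier : Finset (Matrix (Config I₁ I₂) (Config I₁ I₂) ℂ)
  isPauli : ∀ g ∈ carrier, IsPauli g
  one_mem : (1 : Matrix (Config I₁ I₂) (Config I₁ I₂) ℂ) ∈ carrier
  mul_mem : ∀ g ∈ carrier, ∀ h ∈ carrier, g * h ∈ carrier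
  mul_comm : ∀ g ∈ carrier, ∀ h ∈ carrier, g * h = h * g
  neg_one_not_mem : (-1 : Matrix (Config I₁ I₂) (Config I₁ I₂) ℂ) ∉ carrier
  hermitian : ∀ g ∈ carrier, g.IsHermitian
  sq_eq_one : ∀ g ∈ carrier, g * g = 1

/-- The stabilizer density matrix `ρ = 2^{−N_A}·Σ_{g ∈ G} g`. -/
def stabDensity (G : StabilizerGroup I₁ I₂) :
    Matrix (Config I₁ I₂) (Config I₁ I₂) ℂ :=
  ((2 : ℂ) ^ (Fintype.card I₁ + Fintype.card I₂))⁻¹ • ∑ g ∈ G.carrier, g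

/-- The realignment of a matrix on a bipartite system:
`R_M[(c₁,c₁'),(c₂,c₂')] = M[(c₁,c₂),(c₁',c₂')]`. -/
def realign {C₁ C₂ : Type*} (M : Matrix (C₁ × C₂) (C₁ × C₂) ℂ) :
    Matrix (C₁ × C₁) (C₂ × C₂) ℂ :=
  fun p q => M (p.1, q.1) (p.2, q.2)

/-- The partial transpose on the second factor:
`M^{T₂}[(c₁,c₂),(c₁',c₂')] = M[(c₁,c₂'),(c₁',c₂)]`. -/
def ptranspose {C₁ C₂ R : Type*} (M : Matrix (C₁ × C₂) (C₁ × C₂) R) :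
    Matrix (C₁ × C₂) (C₁ × C₂) R :=
  fun c c' => M (c.1, c'.2) (c'.1, c.2)

/-- The trace norm `‖M‖₁ = Tr√(MᴴM)` of a complex matrix. -/
def traceNorm {m n : Type*} [Fintype m] [Fintype n] [DecidableEq n]
    (M : Matrix m n ℂ) : ℝ :=
  (((Matrix.posSemidef_conjTranspose_mul_self M).1.eigenvectorUnitary : Matrix n n ℂ) *
    Matrix.diagonal ((fun x : ℝ => (x : ℂ)) ∘ Real.sqrt ∘ (Matrix.posSemidef_conjTranspose_mul_self M).1.eigenvalues) *
    (star (Matrix.posSemidef_conjTranspose_mul_self M).1.eigenvectorUnitary : Matrix n n ℂ)).trace.re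

end

noncomputable section

variable {I₁ I₂ : Type} [Fintype I₁] [Fintype I₂] [DecidableEq I₁] [DecidableEq I₂]

/-- Sign-free tensor product of single-qubit Pauli matrices on `I₂` alone. -/
def pauliTensorOn2 (b : I₂ → Fin 4) : Matrix (I₂ → Fin 2) (I₂ → Fin 2) ℂ :=
  fun c c' => ∏ i, pauli (b i) (c i) (c' i)

open scoped Classical in
/-- The `A₂`-restriction `p_{A₂}(g)` of a Pauli operator `g = ε·(P₁ ⊗ P₂)`, namely the
sign-free tensor factor `P₂` acting on `I₂` (and `0` on non-Pauli matrices). -/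
def pA2 (M : Matrix (Config I₁ I₂) (Config I₁ I₂) ℂ) :
    Matrix (I₂ → Fin 2) (I₂ → Fin 2) ℂ :=
  if h : IsPauli M then
    pauliTensorOn2 (fun i => Classical.choose (Classical.choose_spec h) (Sum.inr i))
  else 0

/-- `z`, `w`, `wbar` form a canonical generating set with parameters `(r,s)` of the
group with carrier `Hcar`: they are independent generators of `Hcar` (so
`|Hcar| = 2^{r+2s}`), each `p_{A₂}(zᵢ)` commutes with the `A₂`-restrictions of all
listed generators, and each `p_{A₂}(wᵢ)` anticommutes with `p_{A₂}(w̄ᵢ)` and commutes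
with the `A₂`-restrictions of all other listed generators. -/
def CanonicalGenSet (Hcar : Finset (Matrix (Config I₁ I₂) (Config I₁ I₂) ℂ))
    (r s : ℕ) (z : Fin r → Matrix (Config I₁ I₂) (Config I₁ I₂) ℂ)
    (w wbar : Fin s → Matrix (Config I₁ I₂) (Config I₁ I₂) ℂ) : Prop :=
  (∀ i, z i ∈ Hcar) ∧ (∀ i, w i ∈ Hcar) ∧ (∀ i, wbar i ∈ Hcar) ∧
  (∀ g ∈ Hcar, g ∈ Submonoid.closure (Set.range z ∪ Set.range w ∪ Set.range wbar)) ∧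
  Hcar.card = 2 ^ (r + 2 * s) ∧
  (∀ i j, Commute (pA2 (z i)) (pA2 (z j))) ∧
  (∀ i j, Commute (pA2 (z i)) (pA2 (w j))) ∧
  (∀ i j, Commute (pA2 (z i)) (pA2 (wbar j))) ∧
  (∀ i j, Commute (pA2 (w i)) (pA2 (w j))) ∧
  (∀ i j, Commute (pA2 (wbar i)) (pA2 (wbar j))) ∧
  (∀ i j, i ≠ j → Commute (pA2 (w i)) (pA2 (wbar j))) ∧
  (∀ i, pA2 (w i) * pA2 (wbar i) = -(pA2 (wbar i) * pA2 (w i)))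

end

/-!
Write `⟪g, h⟫ ∈ ZMod 2` for `0` if `p_{A₂}(g)` and `p_{A₂}(h)` commute and `1` otherwise. Pauli
strings multiply sitewise, so `⟪g, h⟫` is the parity of the number of sites of `I₂` at which the
single-qubit factors of `g` and `h` anticommute; hence `⟪·, ·⟫` is a biadditive alternating form on
`H`, an elementary abelian group of order `2 ^ m`. A canonical generating set is a symplectic basis
for it: if the form vanishes on `H`, take any `m` generators; otherwise pick `g, h` with
`⟪g, h⟫ = 1` and recurse on the subgroup of elements orthogonal to both, which has index `4`.
-/

open Matrix

noncomputable section

theorem zmod_two_eq_zero_or_eq_one (x : ZMod 2) : x = 0 ∨ x = 1 := by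
  revert x; decide

section KroneckerPi

variable {ι n R : Type*} [Fintype ι]

def kroneckerPi [CommMonoid R] (M : ι → Matrix n n R) : Matrix (ι → n) (ι → n) R :=
  fun c c' => ∏ i, M i (c i) (c' i)

variable [CommSemiring R]

theorem kroneckerPi_mul [DecidableEq ι] [Fintype n] (M N : ι → Matrix n n R) :
    kroneckerPi M * kroneckerPi N = kroneckerPi (M * N) := by
  ext c c'
  simp only [kroneckerPi, mul_apply, Pi.mul_apply, ← Finset.prod_mul_distrib]
  exact (Fintype.prod_sum fun i x => M i (c i) x * N i x (c' i)).symm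

theorem kroneckerPi_smul (a : ι → R) (M : ι → Matrix n n R) :
    kroneckerPi (fun i => a i • M i) = (∏ i, a i) • kroneckerPi M := by
  ext c c'
  simp [kroneckerPi, Finset.prod_mul_distrib]

theorem trace_kroneckerPi [DecidableEq ι] [Fintype n] (M : ι → Matrix n n R) :
    (kroneckerPi M).trace = ∏ i, (M i).trace := by
  simp only [trace, diag, kroneckerPi]
  exact (Fintype.prod_sum fun i x => M i x x).symm

theorem conjTranspose_kroneckerPi [StarRing R] (M : ι → Matrix n n R) :
    (kroneckerPi M)ᴴ = kroneckerPi fun i => (M i)ᴴ := by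
  ext c c'
  simp [kroneckerPi, conjTranspose_apply, star_prod]

end KroneckerPi

section Pauli

def pauliMulIndex : Fin 4 → Fin 4 → Fin 4 :=
  ![![0, 1, 2, 3], ![1, 0, 3, 2], ![2, 3, 0, 1], ![3, 2, 1, 0]]

def pauliMulPhase : Fin 4 → Fin 4 → ℂ :=
  ![![1, 1, 1, 1], ![1, 1, Complex.I, -Complex.I], ![1, -Complex.I, 1, Complex.I],
    ![1, Complex.I, -Complex.I, 1]]

def pauliSympl (x y : Fin 4) : ZMod 2 := if x ≠ 0 ∧ y ≠ 0 ∧ x ≠ y then 1 else 0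

theorem pauli_mul (x y : Fin 4) :
    pauli x * pauli y = pauliMulPhase x y • pauli (pauliMulIndex x y) := by
  fin_cases x <;> fin_cases y <;>
    ext i j <;> fin_cases i <;> fin_cases j <;>
    simp [pauli, pauliMulPhase, pauliMulIndex, mul_apply, Fin.sum_univ_two]

theorem pauliMulPhase_ne_zero (x y : Fin 4) : pauliMulPhase x y ≠ 0 := by
  fin_cases x <;> fin_cases y <;> simp [pauliMulPhase]

theorem pauli_mul_comm (x y : Fin 4) :
    pauli y * pauli x = (-1 : ℂ) ^ (pauliSympl x y).val • (pauli x * pauli y) := by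
  fin_cases x <;> fin_cases y <;>
    ext i j <;> fin_cases i <;> fin_cases j <;>
    simp [pauli, pauliSympl, mul_apply, Fin.sum_univ_two, ZMod.val_one]

theorem trace_conjTranspose_pauli_mul (x y : Fin 4) :
    ((pauli x)ᴴ * pauli y).trace = if x = y then 2 else 0 := by
  fin_cases x <;> fin_cases y <;>
    simp [pauli, trace, mul_apply, Fin.sum_univ_two] <;> norm_num

theorem pauliSympl_pauliMulIndex (x y z : Fin 4) :
    pauliSympl (pauliMulIndex x y) z = pauliSympl x z + pauliSympl y z := by
  revert x y z; decide

end Pauli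

theorem prod_neg_one_pow_val {ι R : Type*} [Fintype ι] [CommRing R] (s : ι → ZMod 2) :
    ∏ i, (-1 : R) ^ (s i).val = (-1) ^ (∑ i, s i).val := by
  rw [Finset.prod_pow_eq_pow_sum, neg_one_pow_eq_pow_mod_two, ← ZMod.val_natCast,
    Nat.cast_sum]
  simp only [ZMod.natCast_val, ZMod.cast_id', id]

section PauliString

variable {ι : Type*} [Fintype ι]

def pauliStringSympl (a b : ι → Fin 4) : ZMod 2 := ∑ i, pauliSympl (a i) (b i)

theorem pauliStringSympl_pauliMulIndex (a b c : ι → Fin 4) :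
    pauliStringSympl (fun i => pauliMulIndex (a i) (b i)) c =
      pauliStringSympl a c + pauliStringSympl b c := by
  simp only [pauliStringSympl, pauliSympl_pauliMulIndex, Finset.sum_add_distrib]

variable [DecidableEq ι]

def pauliString (a : ι → Fin 4) : Matrix (ι → Fin 2) (ι → Fin 2) ℂ :=
  kroneckerPi fun i => pauli (a i)

theorem pauliString_mul (a b : ι → Fin 4) :
    pauliString a * pauliString b =
      (∏ i, pauliMulPhase (a i) (b i)) • pauliString fun i => pauliMulIndex (a i) (b i) := by
  simp only [pauliString, kroneckerPi_mul, Pi.mul_def, pauli_mul, kroneckerPi_smul]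

theorem pauliString_mul_comm (a b : ι → Fin 4) :
    pauliString b * pauliString a =
      (-1 : ℂ) ^ (pauliStringSympl a b).val • (pauliString a * pauliString b) := by
  simp only [pauliString, pauliStringSympl, kroneckerPi_mul, Pi.mul_def]
  rw [funext fun i => pauli_mul_comm (a i) (b i), kroneckerPi_smul, prod_neg_one_pow_val]

theorem trace_conjTranspose_pauliString_mul (a b : ι → Fin 4) :
    ((pauliString a)ᴴ * pauliString b).trace = ∏ i, if a i = b i then 2 else 0 := by
  simp only [pauliString, conjTranspose_kroneckerPi, kroneckerPi_mul, trace_kroneckerPi,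
    Pi.mul_def, trace_conjTranspose_pauli_mul]

theorem trace_conjTranspose_pauliString_mul_self_ne_zero (a : ι → Fin 4) :
    ((pauliString a)ᴴ * pauliString a).trace ≠ 0 := by
  simp [trace_conjTranspose_pauliString_mul]

theorem pauliString_ne_zero (a : ι → Fin 4) : pauliString a ≠ 0 := fun h => by
  simpa [h] using trace_conjTranspose_pauliString_mul_self_ne_zero a

theorem eq_of_smul_pauliString_eq {a b : ι → Fin 4} {ε δ : ℂ} (hε : ε ≠ 0)
    (h : ε • pauliString a = δ • pauliString b) : a = b := by
  have htrace : ε * ((pauliString a)ᴴ * pauliString a).trace =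
      δ * ((pauliString a)ᴴ * pauliString b).trace := by
    simpa only [Matrix.mul_smul, trace_smul, smul_eq_mul] using
      congrArg (fun M => ((pauliString a)ᴴ * M).trace) h
  have hne : ((pauliString a)ᴴ * pauliString b).trace ≠ 0 := fun h0 =>
    mul_ne_zero hε (trace_conjTranspose_pauliString_mul_self_ne_zero a) (by simp [htrace, h0])
  rw [trace_conjTranspose_pauliString_mul, Finset.prod_ne_zero_iff] at hne
  exact funext fun i => by simpa using hne i (Finset.mem_univ i)

theorem pauliString_mul_ne_zero (a b : ι → Fin 4) : pauliString a * pauliString b ≠ 0 := by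
  rw [pauliString_mul]
  exact smul_ne_zero (Finset.prod_ne_zero_iff.2 fun i _ => pauliMulPhase_ne_zero _ _)
    (pauliString_ne_zero _)

theorem commute_pauliString_iff (a b : ι → Fin 4) :
    Commute (pauliString a) (pauliString b) ↔ pauliStringSympl a b = 0 := by
  rw [Commute, SemiconjBy, eq_comm, pauliString_mul_comm]
  rcases zmod_two_eq_zero_or_eq_one (pauliStringSympl a b) with h | h
  · simp [h]
  · simp only [h, ZMod.val_one, pow_one, neg_smul, one_smul, one_ne_zero, iff_false]
    refine fun hneg => pauliString_mul_ne_zero a b ?_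
    have h2 : (2 : ℂ) • (pauliString a * pauliString b) = 0 := by
      rw [two_smul]; nth_rewrite 1 [← hneg]; exact neg_add_cancel _
    exact (smul_eq_zero.1 h2).resolve_left two_ne_zero

theorem pauliString_mul_eq_neg {a b : ι → Fin 4} (h : pauliStringSympl a b = 1) :
    pauliString a * pauliString b = -(pauliString b * pauliString a) := by
  conv_rhs => rw [pauliString_mul_comm a b, h]
  simp [ZMod.val_one]

end PauliString

section Bipartite

variable {I₁ I₂ : Type} [Fintype I₁] [Fintype I₂]

theorem pauliTensor_eq_submatrix (a : I₁ ⊕ I₂ → Fin 4) :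
    pauliTensor a = (pauliString a).submatrix (Equiv.sumArrowEquivProdArrow I₁ I₂ (Fin 2)).symm
      (Equiv.sumArrowEquivProdArrow I₁ I₂ (Fin 2)).symm :=
  rfl

variable [DecidableEq I₂]

open scoped Classical in
def commParity (M N : Matrix (Config I₁ I₂) (Config I₁ I₂) ℂ) : ZMod 2 :=
  if Commute (pA2 M) (pA2 N) then 0 else 1

theorem commParity_comm (M N : Matrix (Config I₁ I₂) (Config I₁ I₂) ℂ) :
    commParity M N = commParity N M := by
  by_cases h : Commute (pA2 M) (pA2 N)
  · simp [commParity, h, h.symm]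
  · simp [commParity, h, mt Commute.symm h]

theorem commParity_self (M : Matrix (Config I₁ I₂) (Config I₁ I₂) ℂ) : commParity M M = 0 :=
  if_pos (Commute.refl _)

theorem commute_pA2_of_commParity_eq_zero {M N : Matrix (Config I₁ I₂) (Config I₁ I₂) ℂ}
    (h : commParity M N = 0) : Commute (pA2 M) (pA2 N) := by
  by_contra hc
  simp [commParity, hc] at h

variable [DecidableEq I₁]

theorem pauliTensor_mul (a b : I₁ ⊕ I₂ → Fin 4) :
    pauliTensor a * pauliTensor b =
      (∏ i, pauliMulPhase (a i) (b i)) • pauliTensor fun i => pauliMulIndex (a i) (b i) := by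
  rw [pauliTensor_eq_submatrix, pauliTensor_eq_submatrix, submatrix_mul_equiv, pauliString_mul]
  rfl

theorem eq_of_smul_pauliTensor_eq {a b : I₁ ⊕ I₂ → Fin 4} {ε δ : ℂ} (hε : ε ≠ 0)
    (h : ε • pauliTensor a = δ • pauliTensor b) : a = b := by
  refine eq_of_smul_pauliString_eq (δ := δ) hε ?_
  simpa [pauliTensor_eq_submatrix, submatrix_smul] using
    congrArg (fun M => M.submatrix (Equiv.sumArrowEquivProdArrow I₁ I₂ (Fin 2))
      (Equiv.sumArrowEquivProdArrow I₁ I₂ (Fin 2))) h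

theorem pA2_eq {M : Matrix (Config I₁ I₂) (Config I₁ I₂) ℂ} (hM : IsPauli M) {ε : ℂ}
    {a : I₁ ⊕ I₂ → Fin 4} (ha : M = ε • pauliTensor a) :
    pA2 M = pauliString fun i => a (Sum.inr i) := by
  obtain ⟨hsign, hM'⟩ := Classical.choose_spec (Classical.choose_spec hM)
  have hne : Classical.choose hM ≠ 0 := by rcases hsign with h | h <;> rw [h] <;> norm_num
  rw [pA2, dif_pos hM, eq_of_smul_pauliTensor_eq hne (hM'.symm.trans ha)]
  rfl

theorem commParity_eq_pauliStringSympl {M N : Matrix (Config I₁ I₂) (Config I₁ I₂) ℂ}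
    (hM : IsPauli M) (hN : IsPauli N) {ε δ : ℂ} {a b : I₁ ⊕ I₂ → Fin 4}
    (ha : M = ε • pauliTensor a) (hb : N = δ • pauliTensor b) :
    commParity M N = pauliStringSympl (fun i => a (Sum.inr i)) (fun i => b (Sum.inr i)) := by
  rw [commParity, pA2_eq hM ha, pA2_eq hN hb, commute_pauliString_iff]
  split_ifs with h
  · exact h.symm
  · exact ((zmod_two_eq_zero_or_eq_one _).resolve_left h).symm

theorem commParity_mul_left {M N K : Matrix (Config I₁ I₂) (Config I₁ I₂) ℂ}
    (hM : IsPauli M) (hN : IsPauli N) (hK : IsPauli K) (hMN : IsPauli (M * N)) :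
    commParity (M * N) K = commParity M K + commParity N K := by
  obtain ⟨ε, a, -, rfl⟩ := id hM
  obtain ⟨δ, b, -, rfl⟩ := id hN
  obtain ⟨γ, c, -, rfl⟩ := id hK
  have hprod : ε • pauliTensor a * δ • pauliTensor b =
      (ε * δ * ∏ i, pauliMulPhase (a i) (b i)) •
        pauliTensor fun i => pauliMulIndex (a i) (b i) := by
    rw [smul_mul_smul, pauliTensor_mul, smul_smul]
  rw [commParity_eq_pauliStringSympl hMN hK hprod rfl,
    commParity_eq_pauliStringSympl hM hK rfl rfl, commParity_eq_pauliStringSympl hN hK rfl rfl,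
    pauliStringSympl_pauliMulIndex]

theorem pA2_mul_eq_neg_of_commParity_eq_one {M N : Matrix (Config I₁ I₂) (Config I₁ I₂) ℂ}
    (hM : IsPauli M) (hN : IsPauli N) (h : commParity M N = 1) :
    pA2 M * pA2 N = -(pA2 N * pA2 M) := by
  obtain ⟨ε, a, -, ha⟩ := id hM
  obtain ⟨δ, b, -, hb⟩ := id hN
  rw [commParity_eq_pauliStringSympl hM hN ha hb] at h
  rw [pA2_eq hM ha, pA2_eq hN hb]
  exact pauliString_mul_eq_neg h

end Bipartite

section AltPairing

variable {G : Type*} [CommGroup G]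

structure IsAltPairing (B : G → G → ZMod 2) : Prop where
  mul_left : ∀ x y z, B (x * y) z = B x z + B y z
  comm : ∀ x y, B x y = B y x
  self : ∀ x, B x x = 0

namespace IsAltPairing

variable {B : G → G → ZMod 2}

theorem one_left (hB : IsAltPairing B) (z : G) : B 1 z = 0 := by
  simpa using hB.mul_left 1 1 z

theorem inv_left (hB : IsAltPairing B) (x z : G) : B x⁻¹ z = B x z := by
  have h := hB.mul_left x⁻¹ x z
  rw [inv_mul_cancel, hB.one_left] at h
  exact (neg_eq_of_add_eq_zero_left h.symm).symm.trans (ZMod.neg_eq_self_mod_two _)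

def orth (hB : IsAltPairing B) (g : G) : Subgroup G where
  carrier := {x | B x g = 0}
  mul_mem' {x y} hx hy := by simp_all [hB.mul_left]
  one_mem' := hB.one_left g
  inv_mem' {x} hx := (hB.inv_left x g).trans hx

theorem mem_orth (hB : IsAltPairing B) {g x : G} : x ∈ hB.orth g ↔ B x g = 0 := Iff.rfl

theorem card_eq_two_mul_card_inf_orth (hB : IsAltPairing B) {K : Subgroup G} {g y : G}
    (hy : y ∈ K) (hyg : B y g = 1) : Nat.card K = 2 * Nat.card ↥(K ⊓ hB.orth g) := by
  have hindex : (hB.orth g).relIndex K = 2 := by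
    refine Subgroup.relIndex_eq_two_iff.2 ⟨y, hy, fun b _ => ?_⟩
    simp only [mem_orth, hB.mul_left, hyg]
    rcases zmod_two_eq_zero_or_eq_one (B b g) with h | h <;> rw [h] <;> decide
  have h := Subgroup.relIndex_inf_mul_relIndex ⊥ (hB.orth g) K
  rw [bot_inf_eq, Subgroup.relIndex_bot_left, Subgroup.relIndex_bot_left, hindex] at h
  rw [← h, inf_comm, mul_comm]

theorem exists_mem_closure_pair_eq (hB : IsAltPairing B) {g h : G} (hgh : B g h = 1)
    (a b : ZMod 2) : ∃ c ∈ Subgroup.closure {g, h}, B c g = a ∧ B c h = b := by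
  have hhg : B h g = 1 := (hB.comm h g).trans hgh
  have hg : g ∈ Subgroup.closure {g, h} := Subgroup.subset_closure (by simp)
  have hh : h ∈ Subgroup.closure {g, h} := Subgroup.subset_closure (by simp)
  rcases zmod_two_eq_zero_or_eq_one a with rfl | rfl <;>
    rcases zmod_two_eq_zero_or_eq_one b with rfl | rfl
  · exact ⟨1, one_mem _, hB.one_left g, hB.one_left h⟩
  · exact ⟨g, hg, hB.self g, hgh⟩
  · exact ⟨h, hh, hhg, hB.self h⟩
  · exact ⟨h * g, mul_mem hh hg, by simp [hB.mul_left, hhg, hgh, hB.self]⟩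

theorem le_inf_orth_sup_closure_pair (hB : IsAltPairing B) {K : Subgroup G} {g h : G}
    (hg : g ∈ K) (hh : h ∈ K) (hgh : B g h = 1) :
    K ≤ K ⊓ hB.orth g ⊓ hB.orth h ⊔ Subgroup.closure {g, h} := by
  intro x hx
  obtain ⟨c, hc, hcg, hch⟩ := hB.exists_mem_closure_pair_eq hgh (B x g) (B x h)
  have hcK : c ∈ K := Subgroup.closure_le K |>.2 (by simp [Set.insert_subset_iff, hg, hh]) hc
  have hadd : ∀ a : ZMod 2, a + a = 0 := by decide
  have hxc : x * c⁻¹ ∈ K ⊓ hB.orth g ⊓ hB.orth h :=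
    Subgroup.mem_inf.2 ⟨Subgroup.mem_inf.2 ⟨K.mul_mem hx (K.inv_mem hcK),
      by simp [mem_orth, hB.mul_left, hB.inv_left, hcg, hadd]⟩,
      by simp [mem_orth, hB.mul_left, hB.inv_left, hch, hadd]⟩
  simpa using Subgroup.mul_mem_sup hxc hc

end IsAltPairing

end AltPairing

section SymplecticGenSet

variable {G : Type*} [CommGroup G]

structure IsSymplecticGenSet (B : G → G → ZMod 2) (K : Subgroup G) {r s : ℕ} (z : Fin r → G)
    (w wbar : Fin s → G) : Prop where
  z_mem : ∀ i, z i ∈ K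
  w_mem : ∀ i, w i ∈ K
  wbar_mem : ∀ i, wbar i ∈ K
  le_closure : K ≤ Subgroup.closure (Set.range z ∪ Set.range w ∪ Set.range wbar)
  z_z : ∀ i j, B (z i) (z j) = 0
  z_w : ∀ i j, B (z i) (w j) = 0
  z_wbar : ∀ i j, B (z i) (wbar j) = 0
  w_w : ∀ i j, B (w i) (w j) = 0
  wbar_wbar : ∀ i j, B (wbar i) (wbar j) = 0
  w_wbar_of_ne : ∀ i j, i ≠ j → B (w i) (wbar j) = 0
  w_wbar_self : ∀ i, B (w i) (wbar i) = 1

variable {B : G → G → ZMod 2} {K : Subgroup G} {r s : ℕ}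

theorem isSymplecticGenSet_of_forall_eq_zero {z : Fin r → G} (hz : ∀ i, z i ∈ K)
    (hgen : K ≤ Subgroup.closure (Set.range z)) (hB : ∀ x ∈ K, ∀ y ∈ K, B x y = 0) :
    IsSymplecticGenSet B K z Fin.elim0 Fin.elim0 where
  z_mem := hz
  w_mem i := i.elim0
  wbar_mem i := i.elim0
  le_closure := by simpa using hgen
  z_z i j := hB _ (hz i) _ (hz j)
  z_w _ j := j.elim0
  z_wbar _ j := j.elim0
  w_w i := i.elim0
  wbar_wbar i := i.elim0
  w_wbar_of_ne i := i.elim0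
  w_wbar_self i := i.elim0

theorem IsSymplecticGenSet.cons (hB : IsAltPairing B) {g h : G} (hg : g ∈ K) (hh : h ∈ K)
    (hgh : B g h = 1) {z : Fin r → G} {w wbar : Fin s → G}
    (hS : IsSymplecticGenSet B (K ⊓ hB.orth g ⊓ hB.orth h) z w wbar) :
    IsSymplecticGenSet B K z (Fin.cons g w) (Fin.cons h wbar) := by
  have hsub : K ⊓ hB.orth g ⊓ hB.orth h ≤ K := inf_le_left.trans inf_le_left
  have hxg {x} (hx : x ∈ K ⊓ hB.orth g ⊓ hB.orth h) : B x g = 0 :=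
    (Subgroup.mem_inf.1 (Subgroup.mem_inf.1 hx).1).2
  have hxh {x} (hx : x ∈ K ⊓ hB.orth g ⊓ hB.orth h) : B x h = 0 := (Subgroup.mem_inf.1 hx).2
  have hgx {x} (hx : x ∈ K ⊓ hB.orth g ⊓ hB.orth h) : B g x = 0 := (hB.comm g x).trans (hxg hx)
  have hhx {x} (hx : x ∈ K ⊓ hB.orth g ⊓ hB.orth h) : B h x = 0 := (hB.comm h x).trans (hxh hx)
  refine
    { z_mem := fun i => hsub (hS.z_mem i)
      w_mem := Fin.cases hg fun i => hsub (hS.w_mem i)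
      wbar_mem := Fin.cases hh fun i => hsub (hS.wbar_mem i)
      le_closure := ?_
      z_z := hS.z_z
      z_w := fun i => Fin.cases (hxg (hS.z_mem i)) (hS.z_w i)
      z_wbar := fun i => Fin.cases (hxh (hS.z_mem i)) (hS.z_wbar i)
      w_w := Fin.cases (Fin.cases (hB.self g) fun j => hgx (hS.w_mem j))
        fun i => Fin.cases (hxg (hS.w_mem i)) (hS.w_w i)
      wbar_wbar := Fin.cases (Fin.cases (hB.self h) fun j => hhx (hS.wbar_mem j))
        fun i => Fin.cases (hxh (hS.wbar_mem i)) (hS.wbar_wbar i)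
      w_wbar_of_ne :=
        Fin.cases (Fin.cases (fun hne => (hne rfl).elim) fun j _ => hgx (hS.wbar_mem j))
          fun i => Fin.cases (fun _ => hxh (hS.w_mem i))
            fun j hne => hS.w_wbar_of_ne i j (ne_of_apply_ne Fin.succ hne)
      w_wbar_self := Fin.cases hgh hS.w_wbar_self }
  refine (hB.le_inf_orth_sup_closure_pair hg hh hgh).trans (sup_le ?_ ?_)
  · refine hS.le_closure.trans (Subgroup.closure_mono ?_)
    rw [Fin.range_cons, Fin.range_cons]
    exact Set.union_subset_union (Set.union_subset_union le_rfl (Set.subset_insert _ _))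
      (Set.subset_insert _ _)
  · refine Subgroup.closure_mono ?_
    simp [Fin.range_cons, Set.insert_subset_iff]

theorem exists_closure_range_eq_top_of_card_eq_two_pow {A : Type*} [CommGroup A]
    (hsq : ∀ x : A, x * x = 1) {m : ℕ} (hA : Nat.card A = 2 ^ m) :
    ∃ z : Fin m → A, Subgroup.closure (Set.range z) = ⊤ := by
  have : Finite A := Nat.finite_of_card_ne_zero (by simp [hA])
  have := Fintype.ofFinite A
  let _ : Module (ZMod 2) (Additive A) :=
    AddCommGroup.zmodModule fun x => by rw [two_nsmul]; exact hsq x.toMul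
  have hrank : Module.finrank (ZMod 2) (Additive A) = m := by
    have h := Module.card_eq_pow_finrank (K := ZMod 2) (V := Additive A)
    rw [ZMod.card, ← Nat.card_eq_fintype_card] at h
    exact Nat.pow_right_injective le_rfl (h.symm.trans hA)
  let b := Module.finBasisOfFinrankEq (ZMod 2) (Additive A) hrank
  refine ⟨fun i => (b i).toMul, eq_top_iff.2 fun x _ => ?_⟩
  set C := Subgroup.closure (Set.range fun i => (b i).toMul)
  have hspan : Submodule.span (ZMod 2) (Set.range b) ≤
      AddSubgroup.toZModSubmodule 2 (Subgroup.toAddSubgroup C) :=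
    Submodule.span_le.2 <| Set.range_subset_iff.2 fun i =>
      (Subgroup.subset_closure ⟨i, rfl⟩ : (b i).toMul ∈ C)
  exact hspan (b.span_eq ▸ Submodule.mem_top : Additive.ofMul x ∈ _)

theorem Subgroup.exists_le_closure_range_of_card_eq_two_pow (hsq : ∀ x : G, x * x = 1)
    {m : ℕ} (hK : Nat.card K = 2 ^ m) :
    ∃ z : Fin m → G, (∀ i, z i ∈ K) ∧ K ≤ Subgroup.closure (Set.range z) := by
  obtain ⟨z, hz⟩ := exists_closure_range_eq_top_of_card_eq_two_pow
    (fun x : K => Subtype.ext (hsq x)) hK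
  refine ⟨fun i => z i, fun i => (z i).2, ?_⟩
  have h := congrArg (Subgroup.map K.subtype) hz
  rw [MonoidHom.map_closure, ← MonoidHom.range_eq_map, Subgroup.range_subtype,
    ← Set.range_comp] at h
  exact h.ge

theorem exists_isSymplecticGenSet (hsq : ∀ x : G, x * x = 1) (hB : IsAltPairing B) {m : ℕ}
    (hK : Nat.card K = 2 ^ m) :
    ∃ (r s : ℕ) (z : Fin r → G) (w wbar : Fin s → G),
      r + 2 * s = m ∧ IsSymplecticGenSet B K z w wbar := by
  induction m using Nat.strong_induction_on generalizing K with
  | _ m ih =>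
  by_cases hdeg : ∀ x ∈ K, ∀ y ∈ K, B x y = 0
  · obtain ⟨z, hz, hgen⟩ := K.exists_le_closure_range_of_card_eq_two_pow hsq hK
    exact ⟨m, 0, z, Fin.elim0, Fin.elim0, by simp,
      isSymplecticGenSet_of_forall_eq_zero hz hgen hdeg⟩
  push Not at hdeg
  obtain ⟨g, hg, h, hh, hgh⟩ := hdeg
  replace hgh : B g h = 1 := (zmod_two_eq_zero_or_eq_one _).resolve_left hgh
  have hcard : 2 ^ m = 4 * Nat.card ↥(K ⊓ hB.orth g ⊓ hB.orth h) := by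
    rw [← hK, hB.card_eq_two_mul_card_inf_orth hh ((hB.comm h g).trans hgh),
      hB.card_eq_two_mul_card_inf_orth (Subgroup.mem_inf.2 ⟨hg, hB.self g⟩) hgh]
    ring
  have hm : 2 ≤ m := by
    by_contra hlt
    interval_cases m <;> omega
  have hcard' : Nat.card ↥(K ⊓ hB.orth g ⊓ hB.orth h) = 2 ^ (m - 2) := by
    rw [← Nat.sub_add_cancel hm, pow_add] at hcard
    omega
  obtain ⟨r, s, z, w, wbar, hrs, hS⟩ := ih (m - 2) (by omega) hcard'
  exact ⟨r, s + 1, z, Fin.cons g w, Fin.cons h wbar, by omega, hS.cons hB hg hh hgh⟩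

end SymplecticGenSet

namespace StabilizerGroup

variable {I₁ I₂ : Type} [Fintype I₁] [Fintype I₂] [DecidableEq I₁] [DecidableEq I₂]

def Elem (H : StabilizerGroup I₁ I₂) : Type := {M // M ∈ H.carrier}

instance (H : StabilizerGroup I₁ I₂) : CommGroup H.Elem where
  mul x y := ⟨x.1 * y.1, H.mul_mem _ x.2 _ y.2⟩
  one := ⟨1, H.one_mem⟩
  inv x := x
  mul_assoc _ _ _ := Subtype.ext (mul_assoc _ _ _)
  one_mul _ := Subtype.ext (one_mul _)
  mul_one _ := Subtype.ext (mul_one _)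
  inv_mul_cancel x := Subtype.ext (H.sq_eq_one _ x.2)
  mul_comm x y := Subtype.ext (H.mul_comm _ x.2 _ y.2)

theorem Elem.val_mul {H : StabilizerGroup I₁ I₂} (x y : H.Elem) : (x * y).1 = x.1 * y.1 := rfl

theorem Elem.inv_eq {H : StabilizerGroup I₁ I₂} (x : H.Elem) : x⁻¹ = x := rfl

theorem Elem.mul_self {H : StabilizerGroup I₁ I₂} (x : H.Elem) : x * x = 1 :=
  Subtype.ext (H.sq_eq_one _ x.2)

theorem card_elem (H : StabilizerGroup I₁ I₂) : Nat.card H.Elem = H.carrier.card :=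
  Nat.card_eq_finsetCard H.carrier

theorem isAltPairing_commParity (H : StabilizerGroup I₁ I₂) :
    IsAltPairing fun x y : H.Elem => commParity x.1 y.1 where
  mul_left x y z := by
    rw [Elem.val_mul]
    exact commParity_mul_left (H.isPauli _ x.2) (H.isPauli _ y.2) (H.isPauli _ z.2)
      (H.isPauli _ (H.mul_mem _ x.2 _ y.2))
  comm x y := commParity_comm _ _
  self x := commParity_self _

theorem val_mem_closure_image {H : StabilizerGroup I₁ I₂} {S : Set H.Elem} {x : H.Elem}
    (hx : x ∈ Subgroup.closure S) : x.1 ∈ Submonoid.closure ((fun y : H.Elem => y.1) '' S) := by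
  induction hx using Subgroup.closure_induction with
  | mem x hx => exact Submonoid.subset_closure (Set.mem_image_of_mem _ hx)
  | one => exact Submonoid.one_mem _
  | mul x y _ _ hx hy => exact Elem.val_mul x y ▸ Submonoid.mul_mem _ hx hy
  | inv x _ hx => exact (Elem.inv_eq x).symm ▸ hx

theorem canonicalGenSet_of_isSymplecticGenSet (H : StabilizerGroup I₁ I₂) {r s : ℕ}
    {z : Fin r → H.Elem} {w wbar : Fin s → H.Elem}
    (hS : IsSymplecticGenSet (fun x y : H.Elem => commParity x.1 y.1) ⊤ z w wbar)
    (hcard : H.carrier.card = 2 ^ (r + 2 * s)) :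
    CanonicalGenSet H.carrier r s (fun i => (z i).1) (fun i => (w i).1) (fun i => (wbar i).1) := by
  have hanti {x y : H.Elem} (h : commParity x.1 y.1 = 1) :
      pA2 x.1 * pA2 y.1 = -(pA2 y.1 * pA2 x.1) :=
    pA2_mul_eq_neg_of_commParity_eq_one (H.isPauli _ x.2) (H.isPauli _ y.2) h
  refine ⟨fun i => (z i).2, fun i => (w i).2, fun i => (wbar i).2, fun g hg => ?_, hcard,
    fun i j => commute_pA2_of_commParity_eq_zero (hS.z_z i j),
    fun i j => commute_pA2_of_commParity_eq_zero (hS.z_w i j),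
    fun i j => commute_pA2_of_commParity_eq_zero (hS.z_wbar i j),
    fun i j => commute_pA2_of_commParity_eq_zero (hS.w_w i j),
    fun i j => commute_pA2_of_commParity_eq_zero (hS.wbar_wbar i j),
    fun i j hij => commute_pA2_of_commParity_eq_zero (hS.w_wbar_of_ne i j hij),
    fun i => hanti (hS.w_wbar_self i)⟩
  simpa only [Set.image_union, ← Set.range_comp, Function.comp_def] using
    val_mem_closure_image (x := ⟨g, hg⟩) (hS.le_closure (Subgroup.mem_top _))

end StabilizerGroup

end

/-- Every stabilizer group of rank `m` admits a canonical generating set with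
parameters `(r,s)`, `r + 2s = m`. -/
theorem exists_canonicalGenSet {I₁ I₂ : Type} [Fintype I₁] [Fintype I₂]
    [DecidableEq I₁] [DecidableEq I₂]
    (H : StabilizerGroup I₁ I₂) (m : ℕ) (hm : H.carrier.card = 2 ^ m) :
    ∃ (r s : ℕ) (z : Fin r → Matrix (Config I₁ I₂) (Config I₁ I₂) ℂ)
      (w wbar : Fin s → Matrix (Config I₁ I₂) (Config I₁ I₂) ℂ),
      r + 2 * s = m ∧ CanonicalGenSet H.carrier r s z w wbar := by
  have hcard : Nat.card (⊤ : Subgroup H.Elem) = 2 ^ m := by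
    rw [Subgroup.card_top, H.card_elem, hm]
  obtain ⟨r, s, z, w, wbar, hrs, hS⟩ :=
    exists_isSymplecticGenSet StabilizerGroup.Elem.mul_self H.isAltPairing_commParity hcard
  exact ⟨r, s, _, _, _, hrs, H.canonicalGenSet_of_isSymplecticGenSet hS (hrs ▸ hm)⟩
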